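/- Let S ⊆ F_2^n be a Sidon set. Then the Fourier–Hadamard transform of (−1)^{γ_S} equals the function a ↦ 2^n·Δ_0(a) − (\widehat{1_S}(a))^2 + |S|, where Δ_0(0)=1 and Δ_0(a)=0 for a ≠ 0. -/

import Mathlib

open Finset
def dotp {n : ℕ} (a x : Fin n → ZMod 2) : ZMod 2 := ∑ i, a i * x i
def chi {n : ℕ} (a x : Fin n → ZMod 2) : ℤ := (-1 : ℤ) ^ (dotp a x).val
def fourierS {n : ℕ} (S : Finset (Fin n → ZMod 2)) (u : Fin n → ZMod 2) : ℤ :=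
  ∑ x ∈ S, chi u x
def IsSidon {n : ℕ} (S : Set (Fin n → ZMod 2)) : Prop :=
  ∀ a ∈ S, ∀ b ∈ S, ∀ c ∈ S, ∀ d ∈ S,
    a ≠ b → c ≠ d → a + b = c + d → ({a, b} : Set (Fin n → ZMod 2)) = {c, d}
def IsKCover {n : ℕ} (S : Finset (Fin n → ZMod 2)) (k : ℕ) : Prop :=
  0 < k ∧ ∀ p ∉ S,
    {T : Finset (Fin n → ZMod 2) | T ⊆ S ∧ T.card = 3 ∧ ∑ x ∈ T, x = p}.ncard = k
def cayGamma {n : ℕ} (S : Set (Fin n → ZMod 2)) : SimpleGraph (Fin n → ZMod 2) where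
  Adj u v := u + v ≠ 0 ∧ ∃ x ∈ S, (u + v) + x ∈ S
  symm := ⟨by intro u v h; rwa [add_comm v u]⟩
  loopless := ⟨by
    intro u h
    apply h.1
    funext i
    exact CharTwo.add_self_eq_zero (u i)⟩

/-!
Write `(-1) ^ γ_S = 1 - 2 · 1_D` with `D = (S + S) \ {0}` (in characteristic 2, `(a + S) ∩ S ≠ ∅`
means `a ∈ S + S`). The constant `1` contributes `2 ^ n Δ₀(a)` by orthogonality of characters.
Expanding `fourierS S a ^ 2` over pairs `(x, y) ∈ S × S`, the diagonal gives `|S|`, and by the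
Sidon property every `d ∈ D` is `x + y` for exactly two ordered pairs, so the off-diagonal part is
`2 ∑_{d ∈ D} χ_a(d)`.
-/

open scoped Pointwise

section Characters
variable {n : ℕ}

lemma neg_one_pow_val_add (v w : ZMod 2) :
    (-1 : ℤ) ^ (v + w).val = (-1) ^ v.val * (-1) ^ w.val := by
  revert v w; decide

lemma dotp_comm (a x : Fin n → ZMod 2) : dotp a x = dotp x a := by
  simp only [dotp, mul_comm]

lemma dotp_add_left (a b x : Fin n → ZMod 2) : dotp (a + b) x = dotp a x + dotp b x := by
  simp only [dotp, Pi.add_apply, add_mul, sum_add_distrib]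

lemma chi_comm (a x : Fin n → ZMod 2) : chi a x = chi x a := by
  rw [chi, chi, dotp_comm]

lemma chi_add_left (a b x : Fin n → ZMod 2) : chi (a + b) x = chi a x * chi b x := by
  rw [chi, dotp_add_left, neg_one_pow_val_add, chi, chi]

lemma chi_add_right (a x y : Fin n → ZMod 2) : chi a (x + y) = chi a x * chi a y := by
  rw [chi_comm, chi_add_left, chi_comm x, chi_comm y]

lemma chi_zero_right (a : Fin n → ZMod 2) : chi a 0 = 1 := by
  simp [chi, dotp]

lemma chi_single_one {a : Fin n → ZMod 2} {i : Fin n} (hi : a i ≠ 0) :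
    chi (Pi.single i 1) a = -1 := by
  have hai : a i = 1 := by revert hi; generalize a i = v; revert v; decide
  simp [chi, dotp, Pi.single_apply, hai, ZMod.val_one]

lemma sum_chi_left (a : Fin n → ZMod 2) :
    ∑ u, chi u a = if a = 0 then 2 ^ n else 0 := by
  split_ifs with ha
  · subst ha
    simp [chi_zero_right]
  · obtain ⟨i, hi⟩ : ∃ i, a i ≠ 0 := Function.ne_iff.mp ha
    have hflip : ∑ u, chi u a = -∑ u, chi u a := by
      calc ∑ u, chi u a = ∑ u, chi (u + Pi.single i 1) a :=
            (Equiv.sum_comp (Equiv.addRight (Pi.single i 1)) (fun u => chi u a)).symm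
        _ = -∑ u, chi u a := by
            simp only [chi_add_left, chi_single_one hi, mul_neg_one, sum_neg_distrib]
    linarith

end Characters

section Sidon
variable {n : ℕ}

lemma mem_add_self_iff_exists_add_mem {S : Finset (Fin n → ZMod 2)} {u : Fin n → ZMod 2} :
    u ∈ S + S ↔ ∃ x ∈ S, u + x ∈ S := by
  rw [mem_add]
  constructor
  · rintro ⟨x, hx, y, hy, rfl⟩
    exact ⟨y, hy, by rwa [add_assoc, ZModModule.add_self, add_zero]⟩
  · rintro ⟨x, hx, hux⟩
    exact ⟨u + x, hux, x, hx, by rw [add_assoc, ZModModule.add_self, add_zero]⟩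

lemma sq_fourierS_eq_sum_product (S : Finset (Fin n → ZMod 2)) (a : Fin n → ZMod 2) :
    fourierS S a ^ 2 = ∑ p ∈ S ×ˢ S, chi a (p.1 + p.2) := by
  simp only [sq, fourierS, sum_mul_sum, sum_product, chi_add_right]

lemma card_offDiag_filter_add_eq_two {S : Finset (Fin n → ZMod 2)}
    (hS : IsSidon (S : Set (Fin n → ZMod 2))) {d : Fin n → ZMod 2} (hd : d ∈ (S + S).erase 0) :
    #{p ∈ S.offDiag | p.1 + p.2 = d} = 2 := by
  obtain ⟨hd0, hdS⟩ := mem_erase.mp hd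
  obtain ⟨x, hx, y, hy, rfl⟩ := mem_add.mp hdS
  have hxy : x ≠ y := by rintro rfl; exact hd0 (ZModModule.add_self x)
  have hfiber : {p ∈ S.offDiag | p.1 + p.2 = x + y} = {(x, y), (y, x)} := by
    ext ⟨z, w⟩
    simp only [mem_filter, mem_offDiag, mem_insert, mem_singleton, Prod.mk.injEq]
    constructor
    · rintro ⟨⟨hz, hw, hzw⟩, hsum⟩
      exact Set.pair_eq_pair_iff.mp (hS z hz w hw x hx y hy hzw hxy hsum)
    · rintro (⟨rfl, rfl⟩ | ⟨rfl, rfl⟩)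
      · exact ⟨⟨hx, hy, hxy⟩, rfl⟩
      · exact ⟨⟨hy, hx, hxy.symm⟩, add_comm _ _⟩
  rw [hfiber, card_pair (by simp [hxy])]

lemma sq_fourierS_of_isSidon {S : Finset (Fin n → ZMod 2)}
    (hS : IsSidon (S : Set (Fin n → ZMod 2))) (a : Fin n → ZMod 2) :
    fourierS S a ^ 2 = #S + 2 * ∑ d ∈ (S + S).erase 0, chi a d := by
  have hdiag : ∑ p ∈ S.diag, chi a (p.1 + p.2) = #S := by
    simp [ZModModule.add_self, chi_zero_right]
  have hoffDiag : ∑ p ∈ S.offDiag, chi a (p.1 + p.2) = 2 * ∑ d ∈ (S + S).erase 0, chi a d := by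
    have hmaps : ∀ p ∈ S.offDiag, p.1 + p.2 ∈ (S + S).erase 0 := by
      intro p hp
      obtain ⟨hp1, hp2, hne⟩ := mem_offDiag.mp hp
      refine mem_erase.mpr ⟨fun h => hne ?_, add_mem_add hp1 hp2⟩
      rwa [add_eq_zero_iff_eq_neg, ZModModule.neg_eq_self] at h
    rw [← sum_fiberwise_of_maps_to hmaps, mul_sum]
    refine sum_congr rfl fun d hd => ?_
    rw [sum_congr rfl fun p hp => congrArg (chi a) (mem_filter.mp hp).2, sum_const,
      card_offDiag_filter_add_eq_two hS hd, two_nsmul, two_mul]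
  rw [sq_fourierS_eq_sum_product, ← diag_union_offDiag, sum_union (disjoint_diag_offDiag S),
    hdiag, hoffDiag]

end Sidon

open scoped Classical in
theorem stmt17 {n : ℕ} (S : Finset (Fin n → ZMod 2))
    (hS : IsSidon (S : Set (Fin n → ZMod 2))) (a : Fin n → ZMod 2) :
    ∑ u : Fin n → ZMod 2,
        chi u a * (if u ≠ 0 ∧ ∃ x ∈ S, u + x ∈ S then (-1 : ℤ) else 1)
      = 2 ^ n * (if a = 0 then (1 : ℤ) else 0) - (fourierS S a) ^ 2 + (S.card : ℤ) := by
  have hsign : ∀ u : Fin n → ZMod 2,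
      chi u a * (if u ≠ 0 ∧ ∃ x ∈ S, u + x ∈ S then (-1 : ℤ) else 1)
        = chi u a - 2 * if u ∈ (S + S).erase 0 then chi a u else 0 := by
    intro u
    simp only [mem_erase, mem_add_self_iff_exists_add_mem, chi_comm u a]
    split_ifs <;> ring
  rw [sum_congr rfl fun u _ => hsign u, sum_sub_distrib, ← mul_sum, sum_ite_mem, univ_inter,
    sum_chi_left, sq_fourierS_of_isSidon hS]
  split_ifs <;> ring
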